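/- arXiv:1403.5779 — 2 statements merged into one kernel-verified Lean document; each statement's English description precedes it below -/
import Mathlib

section
/- Let ψ ∈ W^{1,∞}(B_r; cl(B_r)) be a Lipschitz map from the ball B_r ⊂ ℝⁿ of radius r centered at 0 into its closure, let g ∈ L¹(B_r), and let f ∈ L¹(B(x₀,2r)) for some x₀ ∈ ℝⁿ and r > 0. Then there exists a measurable set E ⊂ B(x₀,r) of positive Lebesgue measure such that for every a₀ ∈ E the function x ↦ f(ψ(x−a₀)+a₀)·g(x−a₀) belongs to L¹(B(a₀,r)) with L¹(B(a₀,r))-norm at most (1/|B_r|)·‖f‖_{L¹(B(x₀,2r))}·‖g‖_{L¹(B_r)}. -/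
open MeasureTheory Metric Filter ENNReal
open scoped Classical

noncomputable section

attribute [local instance] Matrix.frobeniusNormedAddCommGroup

abbrev Euc (n : ℕ) := EuclideanSpace ℝ (Fin n)

/-- The matrix of the (pointwise) Fréchet derivative. -/
def Dm {n m : ℕ} (u : Euc n → Euc m) (x : Euc n) : Matrix (Fin m) (Fin n) ℝ :=
  Matrix.of fun i j => fderiv ℝ u x (EuclideanSpace.single j 1) i

/-- The linear map associated to a matrix, as a map of Euclidean spaces. -/
def matApply {n : ℕ} (F : Matrix (Fin n) (Fin n) ℝ) (x : Euc n) : Euc n :=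
  WithLp.toLp 2 (fun i => ∑ j, F i j * x j)

/-- `u'` is the weak (distributional) derivative of `u` on `Ω`. -/
def IsWeakDeriv {n m : ℕ} (Ω : Set (Euc n)) (u : Euc n → Euc m)
    (u' : Euc n → Matrix (Fin m) (Fin n) ℝ) : Prop :=
  ∀ φ : Euc n → ℝ, ContDiff ℝ (⊤ : ℕ∞) φ → HasCompactSupport φ → tsupport φ ⊆ Ω →
    ∀ i j, ∫ x in Ω, u x i * fderiv ℝ φ x (EuclideanSpace.single j 1)
         = - ∫ x in Ω, u' x i j * φ x

/-- Membership in the Sobolev space `W^{1,p}(Ω;ℝᵐ)`, with weak derivative `u'`. -/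
def MemW1p {n m : ℕ} (p : ℝ) (Ω : Set (Euc n)) (u : Euc n → Euc m)
    (u' : Euc n → Matrix (Fin m) (Fin n) ℝ) : Prop :=
  IsWeakDeriv Ω u u' ∧ MemLp u (ENNReal.ofReal p) (volume.restrict Ω) ∧
    MemLp u' (ENNReal.ofReal p) (volume.restrict Ω)

/-- Membership in `W^{1,p}₀(Ω;ℝᵐ)`: the function can be approximated in the `W^{1,p}`
norm by Lipschitz functions compactly supported in `Ω`. -/
def MemW1p0 {n m : ℕ} (p : ℝ) (Ω : Set (Euc n)) (u : Euc n → Euc m)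
    (u' : Euc n → Matrix (Fin m) (Fin n) ℝ) : Prop :=
  MemW1p p Ω u u' ∧
  ∀ ε : ℝ, 0 < ε → ∃ v : Euc n → Euc m, (∃ K, LipschitzWith K v) ∧ tsupport v ⊆ Ω ∧
    eLpNorm (fun x => u x - v x) (ENNReal.ofReal p) (volume.restrict Ω)
      + eLpNorm (fun x => u' x - Dm v x) (ENNReal.ofReal p) (volume.restrict Ω)
      ≤ ENNReal.ofReal ε

/-- Weak convergence in `W^{1,p}(Ω)`: boundedness of the norms together with
distributional convergence of the functions and their weak derivatives. -/
def WeakConvW1p {n m : ℕ} (p : ℝ) (Ω : Set (Euc n)) (u : ℕ → Euc n → Euc m)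
    (u' : ℕ → Euc n → Matrix (Fin m) (Fin n) ℝ)
    (v : Euc n → Euc m) (v' : Euc n → Matrix (Fin m) (Fin n) ℝ) : Prop :=
  (∃ C : ℝ≥0∞, C ≠ ⊤ ∧ ∀ j, eLpNorm (u j) (ENNReal.ofReal p) (volume.restrict Ω)
      + eLpNorm (u' j) (ENNReal.ofReal p) (volume.restrict Ω) ≤ C) ∧
  ∀ φ : Euc n → ℝ, ContDiff ℝ (⊤ : ℕ∞) φ → HasCompactSupport φ →
    (∀ i, Tendsto (fun j => ∫ x in Ω, u j x i * φ x) atTop (nhds (∫ x in Ω, v x i * φ x))) ∧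
    (∀ i k, Tendsto (fun j => ∫ x in Ω, u' j x i k * φ x) atTop
      (nhds (∫ x in Ω, v' x i k * φ x)))

/-- The quasiconvex envelope of an extended-real-valued integrand. -/
def qcEnv {n : ℕ} (W : Matrix (Fin n) (Fin n) ℝ → ℝ≥0∞) (F : Matrix (Fin n) (Fin n) ℝ) :
    ℝ≥0∞ :=
  ⨅ (φ : Euc n → Euc n) (_ : ∃ K, LipschitzWith K φ)
    (_ : ∀ x ∈ sphere (0 : Euc n) 1, φ x = matApply F x),
    (∫⁻ x in ball (0 : Euc n) 1, W (Dm φ x)) / volume (ball (0 : Euc n) 1)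

/-- A bounded open set with Lipschitz boundary: near each boundary point, after an
isometric change of coordinates, the domain is the subgraph of a Lipschitz function. -/
def IsLipschitzDomain {n : ℕ} (Ω : Set (Euc n)) : Prop :=
  IsOpen Ω ∧ Bornology.IsBounded Ω ∧
  ∀ x ∈ frontier Ω, ∃ (e : Euc n ≃ₗᵢ[ℝ] Euc n) (i₀ : Fin n) (r : ℝ) (K : NNReal)
      (g : (Fin n → ℝ) → ℝ), 0 < r ∧ LipschitzWith K g ∧
      ∀ y ∈ ball x r, (y ∈ Ω ↔ e y i₀ < g (fun i => if i = i₀ then 0 else e y i))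

/-- Index type for the minors of an `n × n` matrix: a size `k+1 ≤ n` together with
strictly increasing selections of rows and columns. -/
def MinorIndex (n : ℕ) : Type :=
  Σ k : Fin n, ((Fin (k.1 + 1)) ↪o Fin n) × ((Fin (k.1 + 1)) ↪o Fin n)

/-- The vector of all minors of a matrix. -/
def minorsVec {n : ℕ} (F : Matrix (Fin n) (Fin n) ℝ) : MinorIndex n → ℝ :=
  fun s => (F.submatrix s.2.1 s.2.2).det

/-- Polyconvexity: the function is a lower semicontinuous convex function of the minors. -/
def IsPolyconvex {n : ℕ} (W : Matrix (Fin n) (Fin n) ℝ → ℝ≥0∞) : Prop :=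
  ∃ g : (MinorIndex n → ℝ) → ℝ≥0∞, LowerSemicontinuous g ∧
    (∀ (a : ℝ) (x y : MinorIndex n → ℝ), 0 ≤ a → a ≤ 1 →
      g (a • x + (1 - a) • y) ≤ ENNReal.ofReal a * g x + ENNReal.ofReal (1 - a) * g y) ∧
    ∀ F, W F = g (minorsVec F)

/-- The functional `u ↦ ∫_Ω (V(Du) + f(u))`, set to `∞` unless there is a weak
derivative `u'` satisfying the admissibility condition `A u u'`. -/
def energyA {n : ℕ} (Ω : Set (Euc n))
    (A : (Euc n → Euc n) → (Euc n → Matrix (Fin n) (Fin n) ℝ) → Prop)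
    (V : Matrix (Fin n) (Fin n) ℝ → ℝ≥0∞) (f : Euc n → ℝ) (u : Euc n → Euc n) : EReal :=
  if h : ∃ u', A u u' then
    ((∫⁻ x in Ω, V (h.choose x) : ℝ≥0∞) : EReal) + ((∫ x in Ω, f (u x) : ℝ) : EReal)
  else (⊤ : EReal)

/-- Equality of traces on a part `Γ` of the boundary of `Ω`: any cutoff of the
difference which meets the boundary only inside `Γ` lies in `W^{1,p}₀(Ω)`. -/
def TraceEqOn {n : ℕ} (p : ℝ) (Ω Γ : Set (Euc n)) (u : Euc n → Euc n)
    (u' : Euc n → Matrix (Fin n) (Fin n) ℝ) (u₀ : Euc n → Euc n)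
    (u₀' : Euc n → Matrix (Fin n) (Fin n) ℝ) : Prop :=
  ∀ φ : Euc n → ℝ, ContDiff ℝ (⊤ : ℕ∞) φ → HasCompactSupport φ → tsupport φ ∩ frontier Ω ⊆ Γ →
    MemW1p0 p Ω (fun x => φ x • (u x - u₀ x))
      (fun x => Matrix.of fun i j =>
        φ x * (u' x i j - u₀' x i j)
          + (u x i - u₀ x i) * fderiv ℝ φ x (EuclideanSpace.single j 1))


set_option maxHeartbeats 2000000 in
theorem translation_lemma {n : ℕ} (r : ℝ) (hr : 0 < r) (x₀ : Euc n)
    (ψ : Euc n → Euc n)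
    (hψlip : ∃ K, LipschitzOnWith K ψ (ball (0 : Euc n) r))
    (hψmap : Set.MapsTo ψ (ball (0 : Euc n) r) (closedBall (0 : Euc n) r))
    (g f : Euc n → ℝ)
    (hg : IntegrableOn g (ball (0 : Euc n) r))
    (hf : IntegrableOn f (ball x₀ (2 * r))) :
    ∃ E : Set (Euc n), E ⊆ ball x₀ r ∧ MeasurableSet E ∧ 0 < volume E ∧
      ∀ a₀ ∈ E,
        IntegrableOn (fun x => f (ψ (x - a₀) + a₀) * g (x - a₀)) (ball a₀ r) ∧
        ∫ x in ball a₀ r, |f (ψ (x - a₀) + a₀) * g (x - a₀)|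
          ≤ (volume (ball (0 : Euc n) r)).toReal⁻¹
            * ((∫ x in ball x₀ (2 * r), |f x|) * ∫ x in ball (0 : Euc n) r, |g x|) := by
  classical
  have hB0m : MeasurableSet (ball (0 : Euc n) r) := measurableSet_ball
  have hB1m : MeasurableSet (ball x₀ r) := measurableSet_ball
  have hB2m : MeasurableSet (ball x₀ (2 * r)) := measurableSet_ball
  obtain ⟨K, hK⟩ := hψlip
  have hψae : AEMeasurable ψ (volume.restrict (ball (0 : Euc n) r)) :=
    hK.continuousOn.aemeasurable hB0m
  set ψ' : Euc n → Euc n := hψae.mk ψ with hψ'def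
  have hψ'm : Measurable ψ' := hψae.measurable_mk
  have hψeq : ψ =ᵐ[volume.restrict (ball (0 : Euc n) r)] ψ' := hψae.ae_eq_mk
  have hfsm := hf.aestronglyMeasurable
  set f' : Euc n → ℝ := hfsm.mk f with hf'def
  have hf'm : Measurable f' := hfsm.stronglyMeasurable_mk.measurable
  have hfeq : f =ᵐ[volume.restrict (ball x₀ (2 * r))] f' := hfsm.ae_eq_mk
  have hgsm := hg.aestronglyMeasurable
  set g' : Euc n → ℝ := hgsm.mk g with hg'def
  have hg'm : Measurable g' := hgsm.stronglyMeasurable_mk.measurable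
  have hgeq : g =ᵐ[volume.restrict (ball (0 : Euc n) r)] g' := hgsm.ae_eq_mk
  -- the null set where f ≠ f'
  have hbase : volume ({z | f z ≠ f' z} ∩ ball x₀ (2 * r)) = 0 := by
    have h1 := ae_iff.mp hfeq
    rwa [Measure.restrict_apply' hB2m] at h1
  set S : Set (Euc n) := toMeasurable volume ({z | f z ≠ f' z} ∩ ball x₀ (2 * r)) with hSdef
  have hSm : MeasurableSet S := measurableSet_toMeasurable _ _
  have hS0 : volume S = 0 := by rw [hSdef, measure_toMeasurable]; exact hbase
  have hSf : ∀ z, z ∈ ball x₀ (2 * r) → z ∉ S → f z = f' z := by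
    intro z hz hzS
    by_contra h
    exact hzS (subset_toMeasurable _ _ ⟨h, hz⟩)
  -- Fubini : for a.e. a ∈ B(x₀,r), for a.e. y ∈ B(0,r), ψ' y + a ∉ S
  have hgood : ∀ᵐ a ∂(volume.restrict (ball x₀ r)),
      ∀ᵐ y ∂(volume.restrict (ball (0 : Euc n) r)), ψ' y + a ∉ S := by
    refine Measure.ae_ae_of_ae_prod (p := fun p : Euc n × Euc n => ψ' p.2 + p.1 ∉ S) ?_
    rw [ae_iff]
    have hTm : MeasurableSet {p : Euc n × Euc n | ψ' p.2 + p.1 ∈ S} :=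
      ((hψ'm.comp measurable_snd).add measurable_fst) hSm
    have key : ((volume.restrict (ball x₀ r)).prod
        (volume.restrict (ball (0 : Euc n) r))) {p : Euc n × Euc n | ψ' p.2 + p.1 ∈ S} = 0 := by
      rw [Measure.prod_apply_symm hTm]
      have hz : ∀ y : Euc n, (volume.restrict (ball x₀ r))
          {a : Euc n | ψ' y + a ∈ S} = 0 := by
        intro y
        refine le_antisymm ?_ zero_le
        calc (volume.restrict (ball x₀ r)) {a : Euc n | ψ' y + a ∈ S}
            ≤ volume ((fun a => ψ' y + a) ⁻¹' S) := Measure.restrict_apply_le _ _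
          _ = volume S := measure_preimage_add volume _ S
          _ = 0 := hS0
      simp only [Set.preimage_setOf_eq]
      simp [hz]
    have hset : {p : Euc n × Euc n | ¬ ψ' p.2 + p.1 ∉ S}
        = {p : Euc n × Euc n | ψ' p.2 + p.1 ∈ S} := by
      ext p; simp
    rw [hset]
    exact key
  -- main quantities
  set H : Euc n → ℝ≥0∞ :=
    fun a => ∫⁻ y in ball (0 : Euc n) r, (‖f' (ψ' y + a)‖₊ : ℝ≥0∞) * ‖g' y‖₊ with hHdef
  have hkm : Measurable
      (fun p : Euc n × Euc n => (‖f' (ψ' p.2 + p.1)‖₊ : ℝ≥0∞) * ‖g' p.2‖₊) := by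
    exact ((hf'm.comp ((hψ'm.comp measurable_snd).add
      measurable_fst)).nnnorm.coe_nnreal_ennreal).mul
      ((hg'm.comp measurable_snd).nnnorm.coe_nnreal_ennreal)
  have hHm : Measurable H := hkm.lintegral_prod_right'
  set If : ℝ≥0∞ := ∫⁻ z in ball x₀ (2 * r), (‖f' z‖₊ : ℝ≥0∞) with hIfdef
  set Ig : ℝ≥0∞ := ∫⁻ y in ball (0 : Euc n) r, (‖g' y‖₊ : ℝ≥0∞) with hIgdef
  have hIf_eq : If = ∫⁻ z in ball x₀ (2 * r), (‖f z‖₊ : ℝ≥0∞) :=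
    lintegral_congr_ae (hfeq.mono fun z hz => by simp only [hz])
  have hIg_eq : Ig = ∫⁻ y in ball (0 : Euc n) r, (‖g y‖₊ : ℝ≥0∞) :=
    lintegral_congr_ae (hgeq.mono fun y hy => by simp only [hy])
  have hIf_lt : If < ⊤ := by rw [hIf_eq]; exact hf.2
  have hIg_lt : Ig < ⊤ := by rw [hIg_eq]; exact hg.2
  have hV0 : volume (ball (0 : Euc n) r) ≠ 0 := (measure_ball_pos volume 0 hr).ne'
  have hVt : volume (ball (0 : Euc n) r) ≠ ⊤ := measure_ball_lt_top.ne
  -- inner translation bound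
  have inner_bound : ∀ c : Euc n, ‖c‖ ≤ r →
      (∫⁻ a in ball x₀ r, (‖f' (c + a)‖₊ : ℝ≥0∞)) ≤ If := by
    intro c hc
    have h1 : (∫⁻ a in ball x₀ r, (‖f' (c + a)‖₊ : ℝ≥0∞))
        = ∫⁻ a, (ball x₀ r).indicator (fun a => (‖f' (c + a)‖₊ : ℝ≥0∞)) a :=
      (lintegral_indicator hB1m _).symm
    have h2 : ∀ a, (ball x₀ r).indicator (fun a => (‖f' (c + a)‖₊ : ℝ≥0∞)) a
        ≤ (ball x₀ (2 * r)).indicator (fun z => (‖f' z‖₊ : ℝ≥0∞)) (c + a) := by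
      intro a
      by_cases ha : a ∈ ball x₀ r
      · have hmem : c + a ∈ ball x₀ (2 * r) := by
          rw [mem_ball] at ha ⊢
          have htri : dist (c + a) x₀ ≤ ‖c‖ + dist a x₀ := by
            calc dist (c + a) x₀ ≤ dist (c + a) a + dist a x₀ := dist_triangle _ _ _
              _ = ‖c‖ + dist a x₀ := by rw [dist_eq_norm]; simp
          linarith
        rw [Set.indicator_of_mem ha, Set.indicator_of_mem hmem]
      · rw [Set.indicator_of_notMem ha]
        exact zero_le
    calc (∫⁻ a in ball x₀ r, (‖f' (c + a)‖₊ : ℝ≥0∞))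
        = ∫⁻ a, (ball x₀ r).indicator (fun a => (‖f' (c + a)‖₊ : ℝ≥0∞)) a := h1
      _ ≤ ∫⁻ a, (ball x₀ (2 * r)).indicator (fun z => (‖f' z‖₊ : ℝ≥0∞)) (c + a) :=
          lintegral_mono h2
      _ = ∫⁻ z, (ball x₀ (2 * r)).indicator (fun z => (‖f' z‖₊ : ℝ≥0∞)) z :=
          lintegral_add_left_eq_self _ c
      _ = If := lintegral_indicator hB2m _
  -- Claim A
  have claimA : (∫⁻ a in ball x₀ r, H a) ≤ If * Ig := by
    have hswap : (∫⁻ a in ball x₀ r, H a)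
        = ∫⁻ y in ball (0 : Euc n) r, ∫⁻ a in ball x₀ r,
            (‖f' (ψ' y + a)‖₊ : ℝ≥0∞) * ‖g' y‖₊ :=
      lintegral_lintegral_swap hkm.aemeasurable
    rw [hswap]
    calc (∫⁻ y in ball (0 : Euc n) r, ∫⁻ a in ball x₀ r,
            (‖f' (ψ' y + a)‖₊ : ℝ≥0∞) * ‖g' y‖₊)
        ≤ ∫⁻ y in ball (0 : Euc n) r, (‖g' y‖₊ : ℝ≥0∞) * If := by
          refine lintegral_mono_ae ?_
          filter_upwards [hψeq, ae_restrict_mem hB0m] with y hy hyB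
          have hcr : ‖ψ' y‖ ≤ r := by
            rw [← hy]
            simpa [mem_closedBall, dist_zero_right] using hψmap hyB
          have hmeasf : Measurable (fun a : Euc n => (‖f' (ψ' y + a)‖₊ : ℝ≥0∞)) :=
            (hf'm.comp (measurable_id.const_add (ψ' y))).nnnorm.coe_nnreal_ennreal
          have hcomm : (∫⁻ a in ball x₀ r, (‖f' (ψ' y + a)‖₊ : ℝ≥0∞) * ‖g' y‖₊)
              = (‖g' y‖₊ : ℝ≥0∞) * ∫⁻ a in ball x₀ r, (‖f' (ψ' y + a)‖₊ : ℝ≥0∞) := by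
            rw [← lintegral_const_mul _ hmeasf]
            exact lintegral_congr fun a => mul_comm _ _
          rw [hcomm]
          exact mul_le_mul_right (inner_bound (ψ' y) hcr) _
      _ = Ig * If := lintegral_mul_const _ hg'm.nnnorm.coe_nnreal_ennreal
      _ = If * Ig := mul_comm _ _
  -- Markov
  set Cc : ℝ≥0∞ := If * Ig / volume (ball (0 : Euc n) r) with hCcdef
  have hCct : Cc ≠ ⊤ :=
    (ENNReal.div_lt_top (ENNReal.mul_lt_top hIf_lt hIg_lt).ne hV0).ne
  have hGm : MeasurableSet {a | H a ≤ Cc} := measurableSet_le hHm measurable_const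
  have hpos : 0 < volume (ball x₀ r ∩ {a | H a ≤ Cc}) := by
    by_contra hcon
    push_neg at hcon
    have h0 : volume (ball x₀ r ∩ {a | H a ≤ Cc}) = 0 := le_antisymm hcon zero_le
    have hae : ∀ᵐ a ∂(volume.restrict (ball x₀ r)), Cc < H a := by
      rw [ae_iff]
      have hset : {a | ¬ Cc < H a} = {a | H a ≤ Cc} := by ext a; simp [not_lt]
      rw [hset, Measure.restrict_apply hGm, Set.inter_comm]
      exact h0
    have hne : volume.restrict (ball x₀ r) ≠ 0 := by
      rw [Ne, Measure.restrict_eq_zero]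
      exact (measure_ball_pos volume x₀ hr).ne'
    have hfin : (∫⁻ _ in ball x₀ r, Cc ∂volume) ≠ ⊤ := by
      rw [setLIntegral_const]
      exact ENNReal.mul_ne_top hCct measure_ball_lt_top.ne
    have hstrict := lintegral_strict_mono hne hHm.aemeasurable hfin hae
    rw [setLIntegral_const, Measure.addHaar_ball_center volume x₀ r] at hstrict
    rw [hCcdef, ENNReal.div_mul_cancel hV0 hVt] at hstrict
    exact lt_irrefl _ (lt_of_lt_of_le hstrict claimA)
  -- the bad set
  set Bad : Set (Euc n) := toMeasurable (volume.restrict (ball x₀ r))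
    {a | ¬ ∀ᵐ y ∂(volume.restrict (ball (0 : Euc n) r)), ψ' y + a ∉ S} with hBaddef
  have hBadm : MeasurableSet Bad := measurableSet_toMeasurable _ _
  have hBad0 : volume (Bad ∩ ball x₀ r) = 0 := by
    have h1 : (volume.restrict (ball x₀ r)) Bad = 0 := by
      rw [hBaddef, measure_toMeasurable]
      exact ae_iff.mp hgood
    rwa [Measure.restrict_apply hBadm] at h1
  refine ⟨(ball x₀ r ∩ {a | H a ≤ Cc}) \ Bad,
    fun a ha => ha.1.1, (hB1m.inter hGm).diff hBadm, ?_, ?_⟩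
  · have hsub : (ball x₀ r ∩ {a | H a ≤ Cc}) \ Bad
        = (ball x₀ r ∩ {a | H a ≤ Cc}) \ (Bad ∩ ball x₀ r) := by
      ext a; constructor
      · rintro ⟨ha, hb⟩; exact ⟨ha, fun hmem => hb hmem.1⟩
      · rintro ⟨ha, hb⟩; exact ⟨ha, fun hmem => hb ⟨hmem, ha.1⟩⟩
    rw [hsub, measure_diff_null hBad0]
    exact hpos
  · rintro a₀ ⟨⟨ha1, haH⟩, haB⟩
    have haG : ∀ᵐ y ∂(volume.restrict (ball (0 : Euc n) r)), ψ' y + a₀ ∉ S := by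
      by_contra hcontra
      exact haB (subset_toMeasurable _ _ hcontra)
    have haH' : H a₀ ≤ Cc := haH
    -- a.e. equality on the unit ball
    have heq : (fun y => f (ψ y + a₀) * g y)
        =ᵐ[volume.restrict (ball (0 : Euc n) r)]
        (fun y => f' (ψ' y + a₀) * g' y) := by
      filter_upwards [hψeq, hgeq, haG, ae_restrict_mem hB0m] with y h1 h2 h3 h4
      have hψy : ‖ψ y‖ ≤ r := by
        simpa [mem_closedBall, dist_zero_right] using hψmap h4
      have hball : ψ' y + a₀ ∈ ball x₀ (2 * r) := by
        rw [← h1, mem_ball]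
        rw [mem_ball] at ha1
        calc dist (ψ y + a₀) x₀ ≤ dist (ψ y + a₀) a₀ + dist a₀ x₀ := dist_triangle _ _ _
          _ = ‖ψ y‖ + dist a₀ x₀ := by rw [dist_eq_norm]; simp
          _ < 2 * r := by linarith
      have hff : f (ψ' y + a₀) = f' (ψ' y + a₀) := hSf _ hball h3
      show f (ψ y + a₀) * g y = f' (ψ' y + a₀) * g' y
      rw [h1, h2, hff]
    -- integrability of the measurable representative
    have hmeasR : Measurable (fun y => f' (ψ' y + a₀) * g' y) :=
      (hf'm.comp (hψ'm.add_const a₀)).mul hg'm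
    have hHnorm : (∫⁻ y in ball (0 : Euc n) r, (‖f' (ψ' y + a₀) * g' y‖₊ : ℝ≥0∞)) = H a₀ := by
      rw [hHdef]
      refine lintegral_congr fun y => ?_
      rw [nnnorm_mul, ENNReal.coe_mul]
    have hfinR : HasFiniteIntegral (fun y => f' (ψ' y + a₀) * g' y)
        (volume.restrict (ball (0 : Euc n) r)) := by
      rw [HasFiniteIntegral]; simp only [enorm_eq_nnnorm]; rw [hHnorm]
      exact lt_of_le_of_lt haH' hCct.lt_top
    have hIR : IntegrableOn (fun y => f' (ψ' y + a₀) * g' y) (ball (0 : Euc n) r) :=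
      ⟨hmeasR.aestronglyMeasurable, hfinR⟩
    have hIL : IntegrableOn (fun y => f (ψ y + a₀) * g y) (ball (0 : Euc n) r) :=
      hIR.congr heq.symm
    -- translation
    have hpre : (fun x : Euc n => x - a₀) ⁻¹' (ball (0 : Euc n) r) = ball a₀ r := by
      ext x
      simp [mem_ball, dist_eq_norm]
    have hmp : MeasurePreserving (fun x : Euc n => x - a₀) volume volume :=
      measurePreserving_sub_right volume a₀
    have hemb : MeasurableEmbedding (fun x : Euc n => x - a₀) :=
      (MeasurableEquiv.subRight a₀).measurableEmbedding
    have hInt : IntegrableOn (fun x => f (ψ (x - a₀) + a₀) * g (x - a₀)) (ball a₀ r) := by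
      rw [← hpre]
      exact (hmp.integrableOn_comp_preimage hemb).2 hIL
    refine ⟨hInt, ?_⟩
    have hint_eq : (∫ x in ball a₀ r, |f (ψ (x - a₀) + a₀) * g (x - a₀)|)
        = ∫ y in ball (0 : Euc n) r, |f (ψ y + a₀) * g y| := by
      rw [← hpre]
      exact hmp.setIntegral_preimage_emb hemb (fun y => |f (ψ y + a₀) * g y|) _
    have h2' : (∫ y in ball (0 : Euc n) r, |f (ψ y + a₀) * g y|)
        = ∫ y in ball (0 : Euc n) r, |f' (ψ' y + a₀) * g' y| :=
      integral_congr_ae (heq.mono fun y hy => by simp only [hy])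
    have h3' : (∫ y in ball (0 : Euc n) r, |f' (ψ' y + a₀) * g' y|) = (H a₀).toReal := by
      simp_rw [← Real.norm_eq_abs]
      rw [integral_norm_eq_lintegral_enorm hmeasR.aestronglyMeasurable]; simp only [enorm_eq_nnnorm]; rw [hHnorm]
    have h4' : (H a₀).toReal ≤ Cc.toReal := ENNReal.toReal_mono hCct haH'
    have hfint : (∫ x in ball x₀ (2 * r), |f x|) = If.toReal := by
      simp_rw [← Real.norm_eq_abs]
      rw [integral_norm_eq_lintegral_enorm hfsm]; simp only [enorm_eq_nnnorm]; rw [hIf_eq]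
    have hgint : (∫ x in ball (0 : Euc n) r, |g x|) = Ig.toReal := by
      simp_rw [← Real.norm_eq_abs]
      rw [integral_norm_eq_lintegral_enorm hgsm]; simp only [enorm_eq_nnnorm]; rw [hIg_eq]
    have h5' : Cc.toReal = (volume (ball (0 : Euc n) r)).toReal⁻¹
        * ((∫ x in ball x₀ (2 * r), |f x|) * ∫ x in ball (0 : Euc n) r, |g x|) := by
      rw [hfint, hgint, hCcdef, ENNReal.toReal_div, ENNReal.toReal_mul,
        div_eq_mul_inv, mul_comm]
    rw [hint_eq, h2', h3']
    rw [← h5']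
    exact h4'


end
end

section
/- Let ψ ∈ W^{1,∞}(B₁; cl(B₁)) be a Lipschitz map from the unit ball B₁ ⊂ ℝⁿ into its closure, and let f_k ∈ L¹(B₂;ℝᵐ) for k ∈ ℕ with Σ_k ‖f_k‖_{L¹(B₂)} < ∞. Then each map (x,a₀) ↦ f_k(a₀ + ψ(x−a₀)) is measurable with respect to 2n-dimensional Lebesgue measure, and for almost every a₀ ∈ B₁ the functions z_k(x) = f_k(a₀ + ψ(x−a₀)) belong to L¹(B(a₀,1);ℝᵐ) with Σ_k ‖z_k‖_{L¹(B(a₀,1))} < ∞. -/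
open MeasureTheory Metric Filter ENNReal
open scoped Classical

noncomputable section

attribute [local instance] Matrix.frobeniusNormedAddCommGroup

lemma exists_cont_ext {n : ℕ} (ψ : Euc n → Euc n)
    (hψ : ∃ K, LipschitzOnWith K ψ (ball (0 : Euc n) 1)) :
    ∃ ψt : Euc n → Euc n, Continuous ψt ∧ ∀ v ∈ ball (0 : Euc n) 1, ψt v = ψ v := by
  obtain ⟨K, hK⟩ := hψ
  have h1 : LipschitzOnWith (1 * K) (fun x => (WithLp.equiv 2 (Fin n → ℝ)) (ψ x))
      (ball (0 : Euc n) 1) :=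
    (PiLp.lipschitzWith_ofLp 2 _).comp_lipschitzOnWith hK
  obtain ⟨g, hg, hge⟩ := h1.extend_pi
  refine ⟨fun x => (WithLp.equiv 2 (Fin n → ℝ)).symm (g x),
    (PiLp.continuous_toLp 2 _).comp hg.continuous, fun v hv => ?_⟩
  simp only [← hge hv]; simp

def Sset (n : ℕ) : Set (Euc n × Euc n) :=
  {q | q.2 ∈ ball (0 : Euc n) 1 ∧ q.1 ∈ ball q.2 1}

lemma measurableSet_Sset {n : ℕ} : MeasurableSet (Sset n) := by
  have : IsOpen (Sset n) := by
    have h1 : IsOpen {q : Euc n × Euc n | q.2 ∈ ball (0 : Euc n) 1} :=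
      isOpen_ball.preimage continuous_snd
    have h2 : IsOpen {q : Euc n × Euc n | dist q.1 q.2 < 1} :=
      isOpen_lt (continuous_fst.dist continuous_snd) continuous_const
    have : Sset n = {q : Euc n × Euc n | q.2 ∈ ball (0 : Euc n) 1} ∩
        {q : Euc n × Euc n | dist q.1 q.2 < 1} := by
      ext q; simp [Sset, mem_ball, and_comm]
    rw [this]; exact h1.inter h2
  exact this.measurableSet

lemma htrans {n : ℕ} (a₀ : Euc n) (h : Euc n → ℝ≥0∞) (hh : Measurable h) :
    ∫⁻ x in ball a₀ 1, h (x - a₀) = ∫⁻ v in ball (0 : Euc n) 1, h v := by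
  have hmp : MeasurePreserving (· + a₀) (volume : Measure (Euc n)) volume :=
    measurePreserving_add_right volume a₀
  have hpre : ((· + a₀) ⁻¹' (ball a₀ 1)) = ball (0 : Euc n) 1 := by
    ext v; simp [mem_ball, dist_eq_norm]
  have h2 := hmp.restrict_preimage (measurableSet_ball (x := a₀) (ε := (1:ℝ)))
  rw [hpre] at h2
  have h3 := h2.lintegral_comp (f := fun x => h (x - a₀)) (hh.comp (measurable_id.sub_const a₀))
  rw [← h3]
  refine lintegral_congr fun v => ?_
  simp

lemma key {n : ℕ} (ψt : Euc n → Euc n) (hc : Continuous ψt)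
    (hmap : ∀ v ∈ ball (0 : Euc n) 1, ψt v ∈ closedBall (0 : Euc n) 1)
    (g : Euc n → ℝ≥0∞) (hg : Measurable g) :
    ∫⁻ q in Sset n, g (q.2 + ψt (q.1 - q.2)) ∂((volume : Measure (Euc n)).prod volume)
      ≤ volume (ball (0 : Euc n) 1) * ∫⁻ y in ball (0 : Euc n) 2, g y := by
  have hT : Measurable fun q : Euc n × Euc n => q.2 + ψt (q.1 - q.2) :=
    (continuous_snd.add (hc.comp (continuous_fst.sub continuous_snd))).measurable
  set C := ∫⁻ y in ball (0 : Euc n) 2, g y with hC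
  have hmeas_ind : Measurable ((Sset n).indicator fun q : Euc n × Euc n =>
      g (q.2 + ψt (q.1 - q.2))) := (hg.comp hT).indicator measurableSet_Sset
  calc ∫⁻ q in Sset n, g (q.2 + ψt (q.1 - q.2)) ∂((volume : Measure (Euc n)).prod volume)
      = ∫⁻ q, (Sset n).indicator (fun q : Euc n × Euc n => g (q.2 + ψt (q.1 - q.2))) q
          ∂((volume : Measure (Euc n)).prod volume) :=
        (lintegral_indicator measurableSet_Sset _).symm
    _ = ∫⁻ a₀, ∫⁻ x, (Sset n).indicator (fun q : Euc n × Euc n => g (q.2 + ψt (q.1 - q.2)))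
          (x, a₀) ∂volume ∂volume := lintegral_prod_symm' _ hmeas_ind
    _ = ∫⁻ a₀, (ball (0 : Euc n) 1).indicator
          (fun a₀ => ∫⁻ v in ball (0 : Euc n) 1, g (a₀ + ψt v)) a₀ ∂volume := by
        refine lintegral_congr fun a₀ => ?_
        by_cases ha : a₀ ∈ ball (0 : Euc n) 1
        · rw [Set.indicator_of_mem ha]
          have heq : ∀ x, (Sset n).indicator
              (fun q : Euc n × Euc n => g (q.2 + ψt (q.1 - q.2))) (x, a₀)
              = (ball a₀ 1).indicator (fun x => g (a₀ + ψt (x - a₀))) x := by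
            intro x
            simp only [Set.indicator_apply, Sset, Set.mem_setOf_eq]
            rw [mem_ball_zero_iff] at ha
            simp [mem_ball, ha]
          rw [lintegral_congr heq, lintegral_indicator measurableSet_ball]
          exact htrans a₀ (fun v => g (a₀ + ψt v))
            (hg.comp (measurable_const.add hc.measurable))
        · rw [Set.indicator_of_notMem ha]
          have heq : ∀ x, (Sset n).indicator
              (fun q : Euc n × Euc n => g (q.2 + ψt (q.1 - q.2))) (x, a₀) = 0 := fun x =>
            Set.indicator_of_notMem (fun h => ha h.1) _
          simp [lintegral_congr heq]
    _ = ∫⁻ a₀ in ball (0 : Euc n) 1, ∫⁻ v in ball (0 : Euc n) 1, g (a₀ + ψt v) :=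
        lintegral_indicator measurableSet_ball _
    _ = ∫⁻ v in ball (0 : Euc n) 1, ∫⁻ a₀ in ball (0 : Euc n) 1, g (a₀ + ψt v) := by
        refine lintegral_lintegral_swap ?_
        exact (hg.comp ((continuous_fst.add (hc.comp continuous_snd)).measurable)).aemeasurable
    _ ≤ ∫⁻ _v in ball (0 : Euc n) 1, C := by
        refine setLIntegral_mono' measurableSet_ball fun v hv => ?_
        have hw : ‖ψt v‖ ≤ 1 := mem_closedBall_zero_iff.1 (hmap v hv)
        calc ∫⁻ a₀ in ball (0 : Euc n) 1, g (a₀ + ψt v)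
            = ∫⁻ a₀ in ball (0 : Euc n) 1, (ball (0 : Euc n) 2).indicator g (a₀ + ψt v) := by
              refine setLIntegral_congr_fun measurableSet_ball (fun a₀ ha => ?_)
              rw [Set.indicator_of_mem]
              rw [mem_ball_zero_iff] at ha ⊢
              calc ‖a₀ + ψt v‖ ≤ ‖a₀‖ + ‖ψt v‖ := norm_add_le _ _
                _ < 2 := by linarith
          _ ≤ ∫⁻ a₀, (ball (0 : Euc n) 2).indicator g (a₀ + ψt v) :=
              setLIntegral_le_lintegral _ _
          _ = ∫⁻ y, (ball (0 : Euc n) 2).indicator g y :=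
              (measurePreserving_add_right volume (ψt v)).lintegral_comp
                (hg.indicator measurableSet_ball)
          _ = C := lintegral_indicator measurableSet_ball _
    _ = volume (ball (0 : Euc n) 1) * C := by rw [setLIntegral_const, mul_comm]

lemma null_pull {n : ℕ} (ψt : Euc n → Euc n) (hc : Continuous ψt)
    (hmap : ∀ v ∈ ball (0 : Euc n) 1, ψt v ∈ closedBall (0 : Euc n) 1)
    {N : Set (Euc n)} (hNm : MeasurableSet N) (hN : volume (N ∩ ball (0 : Euc n) 2) = 0) :
    ((volume : Measure (Euc n)).prod volume)
      ((fun q : Euc n × Euc n => q.2 + ψt (q.1 - q.2)) ⁻¹' N ∩ Sset n) = 0 := by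
  have hT : Measurable fun q : Euc n × Euc n => q.2 + ψt (q.1 - q.2) :=
    (continuous_snd.add (hc.comp (continuous_fst.sub continuous_snd))).measurable
  have h1 := key ψt hc hmap (N.indicator (1 : Euc n → ℝ≥0∞)) (measurable_one.indicator hNm)
  have hR : ∫⁻ y in ball (0 : Euc n) 2, N.indicator (1 : Euc n → ℝ≥0∞) y = 0 := by
    rw [lintegral_indicator_one hNm, Measure.restrict_apply hNm]
    exact hN
  have hL : ∫⁻ q in Sset n, N.indicator (1 : Euc n → ℝ≥0∞) (q.2 + ψt (q.1 - q.2))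
      ∂((volume : Measure (Euc n)).prod volume)
      = ((volume : Measure (Euc n)).prod volume)
        ((fun q : Euc n × Euc n => q.2 + ψt (q.1 - q.2)) ⁻¹' N ∩ Sset n) := by
    have heq : ∀ q : Euc n × Euc n, N.indicator (1 : Euc n → ℝ≥0∞) (q.2 + ψt (q.1 - q.2))
        = ((fun q : Euc n × Euc n => q.2 + ψt (q.1 - q.2)) ⁻¹' N).indicator (1 : Euc n × Euc n → ℝ≥0∞) q := by
      intro q
      by_cases h : q.2 + ψt (q.1 - q.2) ∈ N <;>
        simp [Set.indicator_apply, h, Set.mem_preimage]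
    rw [lintegral_congr heq, lintegral_indicator_one (hT hNm),
      Measure.restrict_apply (hT hNm)]
  rw [hL, hR, mul_zero] at h1
  exact le_antisymm h1 zero_le

theorem measurability_of_compositions {n m : ℕ} (ψ : Euc n → Euc n)
    (hψlip : ∃ K, LipschitzOnWith K ψ (ball (0 : Euc n) 1))
    (hψmap : Set.MapsTo ψ (ball (0 : Euc n) 1) (closedBall (0 : Euc n) 1))
    (f : ℕ → Euc n → Euc m)
    (hf : ∀ k, IntegrableOn (f k) (ball (0 : Euc n) 2))
    (hsum : Summable fun k => ∫ x in ball (0 : Euc n) 2, ‖f k x‖) :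
    (∀ k, AEStronglyMeasurable
        (fun q : Euc n × Euc n => f k (q.2 + ψ (q.1 - q.2)))
        (((volume : Measure (Euc n)).prod (volume : Measure (Euc n))).restrict
          {q : Euc n × Euc n | q.2 ∈ ball (0 : Euc n) 1 ∧ q.1 ∈ ball q.2 1})) ∧
    ∀ᵐ a₀ ∂(volume.restrict (ball (0 : Euc n) 1)),
      (∀ k, IntegrableOn (fun x => f k (a₀ + ψ (x - a₀))) (ball a₀ 1)) ∧
      Summable fun k => ∫ x in ball a₀ 1, ‖f k (a₀ + ψ (x - a₀))‖ := by
  obtain ⟨ψt, hψtc, hψteq⟩ := exists_cont_ext ψ hψlip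
  have hmapt : ∀ v ∈ ball (0 : Euc n) 1, ψt v ∈ closedBall (0 : Euc n) 1 := fun v hv => by
    rw [hψteq v hv]; exact hψmap hv
  set T : Euc n × Euc n → Euc n := fun q => q.2 + ψt (q.1 - q.2) with hTdef
  have hTm : Measurable T :=
    (continuous_snd.add (hψtc.comp (continuous_fst.sub continuous_snd))).measurable
  -- strongly measurable versions of the `f k`
  have hfm : ∀ k, AEStronglyMeasurable (f k) (volume.restrict (ball (0 : Euc n) 2)) :=
    fun k => (hf k).aestronglyMeasurable
  set g : ℕ → Euc n → Euc m := fun k => (hfm k).mk (f k) with hgdef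
  have hgsm : ∀ k, StronglyMeasurable (g k) := fun k => (hfm k).stronglyMeasurable_mk
  have hgae : ∀ k, f k =ᵐ[volume.restrict (ball (0 : Euc n) 2)] g k :=
    fun k => (hfm k).ae_eq_mk
  -- the exceptional null sets
  set N : ℕ → Set (Euc n) :=
    fun k => toMeasurable volume ({y | f k y ≠ g k y} ∩ ball (0 : Euc n) 2) with hNdef
  have hNm : ∀ k, MeasurableSet (N k) := fun k => measurableSet_toMeasurable _ _
  have hNnull : ∀ k, volume (N k) = 0 := by
    intro k
    rw [hNdef, measure_toMeasurable]
    have h := hgae k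
    rw [EventuallyEq, ae_iff, Measure.restrict_apply' measurableSet_ball] at h
    exact h
  have hsub : ∀ k, {y | f k y ≠ g k y} ∩ ball (0 : Euc n) 2 ⊆ N k :=
    fun k => subset_toMeasurable _ _
  have hPnull : ∀ k, ((volume : Measure (Euc n)).prod volume) (T ⁻¹' (N k) ∩ Sset n) = 0 :=
    fun k => null_pull ψt hψtc hmapt (hNm k)
      (le_antisymm (le_trans (measure_mono Set.inter_subset_left) (hNnull k).le) zero_le)
  -- membership facts
  have hSsub : ∀ q ∈ Sset n, q.1 - q.2 ∈ ball (0 : Euc n) 1 ∧ T q ∈ ball (0 : Euc n) 2 := by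
    intro q hq
    obtain ⟨h2, h1⟩ := hq
    have hv : q.1 - q.2 ∈ ball (0 : Euc n) 1 := by
      rw [mem_ball_zero_iff]; rw [mem_ball_iff_norm] at h1; exact h1
    refine ⟨hv, ?_⟩
    have hw : ‖ψt (q.1 - q.2)‖ ≤ 1 := mem_closedBall_zero_iff.1 (hmapt _ hv)
    rw [mem_ball_zero_iff] at h2 ⊢
    calc ‖q.2 + ψt (q.1 - q.2)‖ ≤ ‖q.2‖ + ‖ψt (q.1 - q.2)‖ := norm_add_le _ _
      _ < 2 := by linarith
  -- Part 1
  have part1 : ∀ k, AEStronglyMeasurable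
      (fun q : Euc n × Euc n => f k (q.2 + ψ (q.1 - q.2)))
      (((volume : Measure (Euc n)).prod volume).restrict (Sset n)) := by
    intro k
    refine ⟨fun q => g k (T q), (hgsm k).comp_measurable hTm, ?_⟩
    have hae1 : ∀ᵐ q ∂(((volume : Measure (Euc n)).prod volume).restrict (Sset n)),
        q ∈ Sset n := ae_restrict_mem measurableSet_Sset
    have hae2 : ∀ᵐ q ∂(((volume : Measure (Euc n)).prod volume).restrict (Sset n)),
        q ∉ T ⁻¹' (N k) := by
      have h0 : (((volume : Measure (Euc n)).prod volume).restrict (Sset n))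
          (T ⁻¹' (N k)) = 0 := by
        rw [Measure.restrict_apply (hTm (hNm k))]; exact hPnull k
      rw [ae_iff]; simp only [not_not]; exact h0
    filter_upwards [hae1, hae2] with q hq hq2
    have hv := hSsub q hq
    show f k (q.2 + ψ (q.1 - q.2)) = g k (T q)
    rw [← hψteq _ hv.1]
    by_contra hne
    exact hq2 (hsub k ⟨hne, hv.2⟩)
  refine ⟨part1, ?_⟩
  -- Part 2
  set Hq : Euc n × Euc n → ℝ≥0∞ := fun q => ∑' k, (‖g k (T q)‖₊ : ℝ≥0∞) with hHdef
  have hHm : Measurable Hq :=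
    Measurable.ennreal_tsum fun k => ((hgsm k).measurable.comp hTm).enorm
  have hgnorm : ∀ k, ∫⁻ y in ball (0 : Euc n) 2, (‖g k y‖₊ : ℝ≥0∞)
      = ∫⁻ y in ball (0 : Euc n) 2, (‖f k y‖₊ : ℝ≥0∞) :=
    fun k => lintegral_congr_ae (((hgae k).fun_comp fun z => (‖z‖₊ : ℝ≥0∞)).symm)
  have hsumfin : ∑' k, ∫⁻ y in ball (0 : Euc n) 2, (‖f k y‖₊ : ℝ≥0∞) ≠ ⊤ := by
    have heach : ∀ k, ∫⁻ y in ball (0 : Euc n) 2, (‖f k y‖₊ : ℝ≥0∞)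
        = ENNReal.ofReal (∫ y in ball (0 : Euc n) 2, ‖f k y‖) := fun k =>
      (ofReal_integral_norm_eq_lintegral_enorm (hf k)).symm
    rw [tsum_congr heach,
      ← ENNReal.ofReal_tsum_of_nonneg (fun k => integral_nonneg fun _ => norm_nonneg _) hsum]
    exact ofReal_ne_top
  have hkey_k : ∀ k, ∫⁻ q in Sset n, (‖g k (T q)‖₊ : ℝ≥0∞)
      ∂((volume : Measure (Euc n)).prod volume)
      ≤ volume (ball (0 : Euc n) 1) * ∫⁻ y in ball (0 : Euc n) 2, (‖f k y‖₊ : ℝ≥0∞) := by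
    intro k
    have h1 := key ψt hψtc hmapt (fun y => (‖g k y‖₊ : ℝ≥0∞)) (hgsm k).measurable.enorm
    rw [hgnorm k] at h1
    exact h1
  have htot : ∫⁻ q in Sset n, Hq q ∂((volume : Measure (Euc n)).prod volume) < ⊤ := by
    calc ∫⁻ q in Sset n, Hq q ∂((volume : Measure (Euc n)).prod volume)
        = ∑' k, ∫⁻ q in Sset n, (‖g k (T q)‖₊ : ℝ≥0∞)
            ∂((volume : Measure (Euc n)).prod volume) :=
          lintegral_tsum fun k => (((hgsm k).measurable.comp hTm).enorm).aemeasurable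
      _ ≤ ∑' k, volume (ball (0 : Euc n) 1) * ∫⁻ y in ball (0 : Euc n) 2, (‖f k y‖₊ : ℝ≥0∞) :=
          ENNReal.tsum_le_tsum hkey_k
      _ = volume (ball (0 : Euc n) 1)
            * ∑' k, ∫⁻ y in ball (0 : Euc n) 2, (‖f k y‖₊ : ℝ≥0∞) := ENNReal.tsum_mul_left
      _ < ⊤ := ENNReal.mul_lt_top measure_ball_lt_top hsumfin.lt_top
  -- Fubini for finiteness
  have hind : Measurable ((Sset n).indicator Hq) := hHm.indicator measurableSet_Sset
  have hfin_ae : ∀ᵐ a₀ ∂(volume : Measure (Euc n)),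
      ∫⁻ x, (Sset n).indicator Hq (x, a₀) ∂volume < ⊤ := by
    refine ae_lt_top hind.lintegral_prod_left' ?_
    rw [← lintegral_prod_symm' _ hind, lintegral_indicator measurableSet_Sset]
    exact htot.ne
  -- sections of the null sets
  have hsec : ∀ k, ∀ᵐ a₀ ∂(volume : Measure (Euc n)),
      volume {x | (x, a₀) ∈ T ⁻¹' (N k) ∩ Sset n} = 0 := by
    intro k
    have hPm : MeasurableSet (T ⁻¹' (N k) ∩ Sset n) := (hTm (hNm k)).inter measurableSet_Sset
    have hJm : MeasurableSet (Prod.swap ⁻¹' (T ⁻¹' (N k) ∩ Sset n) : Set (Euc n × Euc n)) :=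
      hPm.preimage measurable_swap
    have h0 : ((volume : Measure (Euc n)).prod volume)
        (Prod.swap ⁻¹' (T ⁻¹' (N k) ∩ Sset n)) = 0 := by
      rw [← Measure.map_apply measurable_swap hPm, Measure.prod_swap]
      exact hPnull k
    have h1 := (Measure.measure_prod_null hJm).1 h0
    filter_upwards [h1] with a₀ h
    exact h
  have hmem : ∀ᵐ a₀ ∂(volume.restrict (ball (0 : Euc n) 1)), a₀ ∈ ball (0 : Euc n) 1 :=
    ae_restrict_mem measurableSet_ball
  filter_upwards [hmem, ae_restrict_of_ae hfin_ae,
    ae_restrict_of_ae (ae_all_iff.2 hsec)] with a₀ ha₀ hfin hsecs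
  -- fixed good a₀
  set φmap : Euc n → Euc n := fun x => a₀ + ψt (x - a₀) with hφdef
  have hφm : Measurable φmap :=
    (continuous_const.add (hψtc.comp (continuous_id.sub continuous_const))).measurable
  have hballS : ∀ x ∈ ball a₀ 1, (x, a₀) ∈ Sset n := fun x hx => ⟨ha₀, hx⟩
  have hc_fin : ∫⁻ x in ball a₀ 1, Hq (x, a₀) ∂volume < ⊤ := by
    have heq : ∀ x : Euc n, (Sset n).indicator Hq (x, a₀)
        = (ball a₀ 1).indicator (fun x => Hq (x, a₀)) x := by
      intro x
      simp only [Set.indicator_apply, Sset, Set.mem_setOf_eq]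
      rw [mem_ball_zero_iff] at ha₀
      simp [mem_ball, ha₀]
    rw [← lintegral_indicator measurableSet_ball]
    calc ∫⁻ x, (ball a₀ 1).indicator (fun x => Hq (x, a₀)) x ∂volume
        = ∫⁻ x, (Sset n).indicator Hq (x, a₀) ∂volume :=
          lintegral_congr fun x => (heq x).symm
      _ < ⊤ := hfin
  -- a.e. equality on the ball
  have haek : ∀ k, (fun x => f k (a₀ + ψ (x - a₀)))
      =ᵐ[volume.restrict (ball a₀ 1)] fun x => g k (φmap x) := by
    intro k
    have hsecm : MeasurableSet {x : Euc n | (x, a₀) ∈ T ⁻¹' (N k) ∩ Sset n} :=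
      ((hTm (hNm k)).inter measurableSet_Sset).preimage
        (measurable_id.prodMk measurable_const)
    have h0 : volume.restrict (ball a₀ 1) {x : Euc n | (x, a₀) ∈ T ⁻¹' (N k) ∩ Sset n} = 0 := by
      rw [Measure.restrict_apply hsecm]
      exact measure_mono_null Set.inter_subset_left (hsecs k)
    have h2 : ∀ᵐ x ∂volume.restrict (ball a₀ 1),
        (x, a₀) ∉ T ⁻¹' (N k) ∩ Sset n := by
      rw [ae_iff]; simpa [not_not] using h0
    filter_upwards [ae_restrict_mem (measurableSet_ball (x := a₀) (ε := (1 : ℝ))), h2]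
      with x hx hx2
    have hvx : x - a₀ ∈ ball (0 : Euc n) 1 := by
      rw [mem_ball_zero_iff]; rw [mem_ball_iff_norm] at hx; exact hx
    show f k (a₀ + ψ (x - a₀)) = g k (φmap x)
    rw [← hψteq _ hvx]
    by_contra hne
    have hmem2 : (x, a₀) ∈ Sset n := hballS x hx
    exact hx2 ⟨hsub k ⟨hne, (hSsub (x, a₀) hmem2).2⟩, hmem2⟩
  have hsm : ∀ k, AEStronglyMeasurable (fun x => f k (a₀ + ψ (x - a₀)))
      (volume.restrict (ball a₀ 1)) :=
    fun k => ⟨fun x => g k (φmap x), (hgsm k).comp_measurable hφm, haek k⟩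
  have hnormeq : ∀ k, ∫⁻ x in ball a₀ 1, (‖f k (a₀ + ψ (x - a₀))‖₊ : ℝ≥0∞)
      = ∫⁻ x in ball a₀ 1, (‖g k (φmap x)‖₊ : ℝ≥0∞) :=
    fun k => lintegral_congr_ae ((haek k).fun_comp fun z => (‖z‖₊ : ℝ≥0∞))
  have hboundk : ∀ k, ∫⁻ x in ball a₀ 1, (‖g k (φmap x)‖₊ : ℝ≥0∞) ≤
      ∫⁻ x in ball a₀ 1, Hq (x, a₀) ∂volume :=
    fun k => lintegral_mono fun x => ENNReal.le_tsum k
  constructor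
  · intro k
    refine ⟨hsm k, ?_⟩
    show ∫⁻ x in ball a₀ 1, (‖f k (a₀ + ψ (x - a₀))‖₊ : ℝ≥0∞) < ⊤
    rw [hnormeq k]
    exact lt_of_le_of_lt (hboundk k) hc_fin
  · have h1 : ∑' k, ∫⁻ x in ball a₀ 1, (‖g k (φmap x)‖₊ : ℝ≥0∞) ≠ ⊤ := by
      rw [← lintegral_tsum (f := fun k x => (‖g k (φmap x)‖₊ : ℝ≥0∞))
        (fun k => (((hgsm k).measurable.comp hφm).enorm).aemeasurable)]
      exact hc_fin.ne
    have htsum : ∑' k, ∫⁻ x in ball a₀ 1, (‖f k (a₀ + ψ (x - a₀))‖₊ : ℝ≥0∞) ≠ ⊤ := by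
      rw [tsum_congr hnormeq]; exact h1
    have hsummable := ENNReal.summable_toReal htsum
    refine hsummable.congr fun k => ?_
    exact (integral_norm_eq_lintegral_enorm (hsm k)).symm

end
end
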